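/- arXiv:1704.05361 — 2 statements merged into one kernel-verified Lean document; each statement's English description precedes it below -/
import Mathlib

section
/- Let P and Q be real symmetric positive definite n×n matrices, let A₀ be a real n×n matrix such that −Q − (P A₀ + A₀ᵀ P) is positive semidefinite (i.e., P A₀ + A₀ᵀ P ≼ −Q), and let Ā₁, …, Ā_{n_θ} be real n×n matrices and θ₁, …, θ_{n_θ} real numbers such that |θⱼ| ≤ θ̄ and ‖Āⱼ‖ ≤ ā for all j, where ‖·‖ is the ℓ²-operator norm. If n_θ · ā · θ̄ ≤ λmin(Q) / (2 λmax(P)), then setting A := A₀ + Σ_{j=1}^{n_θ} θⱼ Āⱼ, the matrix P A + Aᵀ P is negative semidefinite. -/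
/-!
Work in the Loewner order on symmetric matrices. With `Δ := Σⱼ θⱼ Āⱼ`, the Hermitian matrix
`P Δ + Δᵀ P` lies below `‖P Δ + Δᵀ P‖ • 1 ≤ 2 ‖P‖ ‖Δ‖ • 1`, and `‖P‖ ≤ λmax(P)`,
`‖Δ‖ ≤ n_θ ā θ̄`, so the hypothesis on `n_θ ā θ̄` gives `P Δ + Δᵀ P ≤ λmin(Q) • 1 ≤ Q`.
Adding `P A₀ + A₀ᵀ P ≤ -Q` yields `P A + Aᵀ P ≤ 0`.
-/

open Matrix
open scoped MatrixOrder Matrix.Norms.L2Operator ComplexOrder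

namespace Matrix

variable {𝕜 n : Type*} [RCLike 𝕜] [Fintype n] [DecidableEq n]

theorem IsHermitian.algebraMap_iInf_eigenvalues_le {A : Matrix n n 𝕜} (hA : A.IsHermitian) :
    algebraMap ℝ (Matrix n n 𝕜) (⨅ i, hA.eigenvalues i) ≤ A := by
  refine algebraMap_le_of_le_spectrum (fun x hx => ?_) hA.isSelfAdjoint
  obtain ⟨i, rfl⟩ := hA.spectrum_real_eq_range_eigenvalues ▸ hx
  exact ciInf_le (Set.finite_range _).bddBelow i

theorem IsHermitian.le_algebraMap_l2_opNorm {A : Matrix n n 𝕜} (hA : A.IsHermitian) :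
    A ≤ algebraMap ℝ (Matrix n n 𝕜) ‖A‖ := by
  obtain _ | _ := isEmpty_or_nonempty n
  · exact (Subsingleton.elim A _).le
  refine le_algebraMap_of_spectrum_le (fun x hx => ?_) hA.isSelfAdjoint
  calc x ≤ ‖(x : 𝕜)‖ := by rw [RCLike.norm_ofReal]; exact le_abs_self x
    _ ≤ ‖A‖ := spectrum.norm_le_norm_of_mem (spectrum.algebraMap_mem 𝕜 hx)

theorem PosSemidef.l2_opNorm_le_iSup_eigenvalues {A : Matrix n n 𝕜} (hA : A.PosSemidef) :
    ‖A‖ ≤ ⨆ i, hA.1.eigenvalues i := by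
  conv_lhs => rw [hA.1.spectral_theorem, Unitary.conjStarAlgAut_apply, ← Unitary.coe_star,
    CStarRing.norm_mul_coe_unitary, CStarRing.norm_coe_unitary_mul, l2_opNorm_diagonal]
  refine (pi_norm_le_iff_of_nonneg (Real.iSup_nonneg hA.eigenvalues_nonneg)).mpr fun i => ?_
  rw [Function.comp_apply, RCLike.norm_ofReal, abs_of_nonneg (hA.eigenvalues_nonneg i)]
  exact le_ciSup (Set.finite_range _).bddAbove i

theorem IsHermitian.mul_add_conjTranspose_mul_le {P : Matrix n n 𝕜} (hP : P.IsHermitian)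
    (Δ : Matrix n n 𝕜) : P * Δ + Δᴴ * P ≤ algebraMap ℝ (Matrix n n 𝕜) (2 * ‖P‖ * ‖Δ‖) := by
  have hH : (P * Δ + Δᴴ * P).IsHermitian := by
    simp only [IsHermitian, conjTranspose_add, conjTranspose_mul, conjTranspose_conjTranspose,
      hP.eq, add_comm]
  have hnorm : ‖P * Δ + Δᴴ * P‖ ≤ 2 * ‖P‖ * ‖Δ‖ :=
    calc ‖P * Δ + Δᴴ * P‖ ≤ ‖P‖ * ‖Δ‖ + ‖Δᴴ‖ * ‖P‖ :=
          (norm_add_le _ _).trans (add_le_add (norm_mul_le _ _) (norm_mul_le _ _))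
      _ = 2 * ‖P‖ * ‖Δ‖ := by rw [l2_opNorm_conjTranspose]; ring
  exact hH.le_algebraMap_l2_opNorm.trans (algebraMap_mono _ hnorm)

theorem IsHermitian.mul_add_conjTranspose_mul_le_of_norm {P Q Δ : Matrix n n 𝕜}
    (hP : P.IsHermitian) (hQ : Q.IsHermitian) (h : 2 * ‖P‖ * ‖Δ‖ ≤ ⨅ i, hQ.eigenvalues i) :
    P * Δ + Δᴴ * P ≤ Q :=
  (hP.mul_add_conjTranspose_mul_le Δ).trans <|
    (algebraMap_mono _ h).trans hQ.algebraMap_iInf_eigenvalues_le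

end Matrix

theorem norm_sum_smul_le {ι E : Type*} [Fintype ι] [SeminormedAddCommGroup E] [NormedSpace ℝ E]
    {θ : ι → ℝ} {v : ι → E} {t a : ℝ} (hθ : ∀ j, |θ j| ≤ t) (hv : ∀ j, ‖v j‖ ≤ a) :
    ‖∑ j, θ j • v j‖ ≤ Fintype.card ι * a * t := by
  calc ‖∑ j, θ j • v j‖ ≤ ∑ _j : ι, t * a := norm_sum_le_of_le _ fun j _ => by
        rw [norm_smul, Real.norm_eq_abs]
        exact mul_le_mul (hθ j) (hv j) (norm_nonneg _) ((abs_nonneg _).trans (hθ j))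
    _ = Fintype.card ι * a * t := by rw [Finset.sum_const, Finset.card_univ, nsmul_eq_mul]; ring

theorem robust_stability_general {n nθ : ℕ}
    (P Q : Matrix (Fin n) (Fin n) ℝ)
    (hP : P.IsHermitian) (hQ : Q.IsHermitian)
    (hPpd : P.PosDef)
    (A₀ : Matrix (Fin n) (Fin n) ℝ)
    (hA₀ : (-Q - (P * A₀ + A₀ᵀ * P)).PosSemidef)
    (Abar : Fin nθ → Matrix (Fin n) (Fin n) ℝ)
    (θ : Fin nθ → ℝ) (θbar abar : ℝ)
    (hθ : ∀ j, |θ j| ≤ θbar)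
    (hA : ∀ j, ‖Matrix.toEuclideanCLM (𝕜 := ℝ) (Abar j)‖ ≤ abar)
    (hbound : (nθ : ℝ) * abar * θbar ≤
        (⨅ i, hQ.eigenvalues i) / (2 * ⨆ i, hP.eigenvalues i)) :
    (-(P * (A₀ + ∑ j, θ j • Abar j) + (A₀ + ∑ j, θ j • Abar j)ᵀ * P)).PosSemidef := by
  obtain _ | ⟨⟨i₀⟩⟩ := isEmpty_or_nonempty (Fin n)
  · convert PosSemidef.zero
    exact Subsingleton.elim _ _
  set Δ := ∑ j, θ j • Abar j
  -- `hA` is about the `L2Operator` norm: `‖toEuclideanCLM A‖ = ‖A‖` holds by `rfl`.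
  have hΔ : ‖Δ‖ ≤ nθ * abar * θbar := by simpa using norm_sum_smul_le (v := Abar) hθ hA
  have hPmax : 0 < ⨆ i, hP.eigenvalues i :=
    (hPpd.eigenvalues_pos i₀).trans_le (le_ciSup (Set.finite_range _).bddAbove i₀)
  have hsmall : 2 * ‖P‖ * ‖Δ‖ ≤ ⨅ i, hQ.eigenvalues i :=
    calc 2 * ‖P‖ * ‖Δ‖ ≤ 2 * (⨆ i, hP.eigenvalues i) * (nθ * abar * θbar) := by
          gcongr
          exact hPpd.posSemidef.l2_opNorm_le_iSup_eigenvalues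
      _ ≤ ⨅ i, hQ.eigenvalues i := by
          rw [mul_comm]; exact (le_div_iff₀ (by positivity)).mp hbound
  have hperturb : P * Δ + Δᵀ * P ≤ Q := by
    simpa only [conjTranspose_eq_transpose_of_trivial] using
      hP.mul_add_conjTranspose_mul_le_of_norm hQ hsmall
  rw [← nonneg_iff_posSemidef, neg_nonneg]
  calc P * (A₀ + Δ) + (A₀ + Δ)ᵀ * P = (P * A₀ + A₀ᵀ * P) + (P * Δ + Δᵀ * P) := by
        rw [transpose_add, mul_add, add_mul]; abel
    _ ≤ -Q + Q := add_le_add (by simpa [le_iff] using hA₀) hperturb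
    _ = 0 := neg_add_cancel Q

/-- **Robust stability (Bergsten–Palm argument).**
If `P A₀ + A₀ᵀ P ≼ −Q` with `P, Q` symmetric positive definite, the perturbation
matrices satisfy `‖Āⱼ‖ ≤ ā` (ℓ²-operator norm) and `|θⱼ| ≤ θ̄`, and
`n_θ · ā · θ̄ ≤ λmin(Q) / (2 λmax(P))`, then for `A := A₀ + Σⱼ θⱼ Āⱼ` the matrix
`P A + Aᵀ P` is negative semidefinite. -/
theorem robust_stability {n nθ : ℕ}
    (P Q : Matrix (Fin n) (Fin n) ℝ)
    (hP : P.IsHermitian) (hQ : Q.IsHermitian)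
    (hPpd : P.PosDef) (hQpd : Q.PosDef)
    (A₀ : Matrix (Fin n) (Fin n) ℝ)
    (hA₀ : (-Q - (P * A₀ + A₀ᵀ * P)).PosSemidef)
    (Abar : Fin nθ → Matrix (Fin n) (Fin n) ℝ)
    (θ : Fin nθ → ℝ) (θbar abar : ℝ)
    (hθ : ∀ j, |θ j| ≤ θbar)
    (hA : ∀ j, ‖Matrix.toEuclideanCLM (𝕜 := ℝ) (Abar j)‖ ≤ abar)
    (hbound : (nθ : ℝ) * abar * θbar ≤
        (⨅ i, hQ.eigenvalues i) / (2 * ⨆ i, hP.eigenvalues i)) :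
    (-(P * (A₀ + ∑ j, θ j • Abar j) + (A₀ + ∑ j, θ j • Abar j)ᵀ * P)).PosSemidef :=
  robust_stability_general P Q hP hQ hPpd A₀ hA₀ Abar θ θbar abar hθ hA hbound
end

section
/- Fix matrices A_i, Ā_{ij} (n×n real), B̄_{ij} (n×n_u real), F̄_{ij} ∈ ℝⁿ, L_i (n×m real), C (m×n real), a real symmetric n×n matrix P, constants θ_j ∈ ℝ, ρ_j > 0, and functions μ_i : ℝ → ℝ, x̂ : ℝ → ℝⁿ, u : ℝ → ℝ^{n_u}. Define φ_{ij}(t) := Ā_{ij} x̂(t) + B̄_{ij} u(t) + F̄_{ij}. Suppose eₓ : ℝ → ℝⁿ and e_{θ_j} : ℝ → ℝ are functions such that at a time t: (i) eₓ has derivative Σᵢ μᵢ(t)[(Aᵢ − LᵢC + Σⱼ θⱼ Ā_{ij}) eₓ(t) + Σⱼ e_{θ_j}(t) φ_{ij}(t)] at t, and (ii) each e_{θ_j} has derivative −(1/ρ_j) Σᵢ μᵢ(t) φ_{ij}(t)ᵀ P eₓ(t) at t. Then the function V(s) := eₓ(s)ᵀ P eₓ(s) + Σⱼ ρ_j e_{θ_j}(s)²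 has derivative at t equal to Σᵢ μᵢ(t) · eₓ(t)ᵀ [P(Aᵢ − LᵢC + Σⱼ θⱼ Ā_{ij}) + (Aᵢ − LᵢC + Σⱼ θⱼ Ā_{ij})ᵀ P] eₓ(t). -/
/-!
Differentiating, `V̇ = 2 ėₓᵀ P eₓ + 2 Σⱼ ρⱼ e_{θⱼ} ė_{θⱼ}`. The parameter-error part of `ėₓ`
contributes `2 Σⱼ e_{θⱼ} Σᵢ μᵢ φᵢⱼᵀ P eₓ`, and the update law makes `ρⱼ ė_{θⱼ}` equal to minus
the inner sum, so these cross terms cancel. What is left, `2 Σᵢ μᵢ (Mᵢ eₓ)ᵀ P eₓ` with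
`Mᵢ = Aᵢ − LᵢC + Σⱼ θⱼ Āᵢⱼ`, is the symmetrized quadratic form `Σᵢ μᵢ eₓᵀ (P Mᵢ + Mᵢᵀ P) eₓ`
because `P` is symmetric.
-/

open Matrix

section

variable {R n : Type*} [CommSemiring R] [Fintype n] {P : Matrix n n R}

theorem Matrix.IsSymm.dotProduct_mulVec_comm (hP : P.IsSymm) (x y : n → R) :
    x ⬝ᵥ P *ᵥ y = y ⬝ᵥ P *ᵥ x := by
  rw [dotProduct_mulVec, dotProduct_comm, ← vecMul_transpose, hP.eq]

theorem Matrix.IsSymm.dotProduct_mul_add_transpose_mul_mulVec (hP : P.IsSymm)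
    (M : Matrix n n R) (x : n → R) :
    x ⬝ᵥ (P * M + Mᵀ * P) *ᵥ x = 2 * (M *ᵥ x ⬝ᵥ P *ᵥ x) := by
  rw [add_mulVec, dotProduct_add, ← mulVec_mulVec, ← mulVec_mulVec, hP.dotProduct_mulVec_comm,
    dotProduct_mulVec x Mᵀ, vecMul_transpose, two_mul]

theorem sum_smul_add_sum_smul_dotProduct {ι κ : Type*} [Fintype ι] [Fintype κ] (μ : ι → R)
    (v : ι → n → R) (e : κ → R) (φ : ι → κ → n → R) (w : n → R) :
    (∑ i, μ i • (v i + ∑ j, e j • φ i j)) ⬝ᵥ w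
      = ∑ i, μ i * (v i ⬝ᵥ w) + ∑ j, e j * ∑ i, μ i * (φ i j ⬝ᵥ w) := by
  simp only [sum_dotProduct, smul_dotProduct, add_dotProduct, smul_eq_mul, mul_add,
    Finset.sum_add_distrib, Finset.mul_sum]
  rw [Finset.sum_comm (f := fun i j => μ i * (e j * (φ i j ⬝ᵥ w)))]
  simp only [mul_left_comm (μ _)]

end

section

variable {𝕜 ι : Type*} [NontriviallyNormedField 𝕜] [Fintype ι] {f g : 𝕜 → ι → 𝕜}
  {f' g' : ι → 𝕜} {t : 𝕜}

theorem HasDerivAt.dotProduct (hf : HasDerivAt f f' t) (hg : HasDerivAt g g' t) :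
    HasDerivAt (fun s => f s ⬝ᵥ g s) (f' ⬝ᵥ g t + f t ⬝ᵥ g') t := by
  simp only [_root_.dotProduct, ← Finset.sum_add_distrib]
  exact HasDerivAt.fun_sum fun i _ => (hasDerivAt_pi.mp hf i).mul (hasDerivAt_pi.mp hg i)

theorem HasDerivAt.mulVec {κ : Type*} (M : Matrix κ ι 𝕜) (hf : HasDerivAt f f' t) :
    HasDerivAt (fun s => M *ᵥ f s) (M *ᵥ f') t :=
  hasDerivAt_pi.mpr fun i => ((hasDerivAt_const t (M i)).dotProduct hf).congr_deriv (by
    rw [zero_dotProduct, zero_add]; rfl)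

theorem HasDerivAt.dotProduct_mulVec_self {P : Matrix ι ι 𝕜} (hP : P.IsSymm)
    (hf : HasDerivAt f f' t) :
    HasDerivAt (fun s => f s ⬝ᵥ P *ᵥ f s) (2 * (f' ⬝ᵥ P *ᵥ f t)) t := by
  convert hf.dotProduct (hf.mulVec P) using 1
  rw [hP.dotProduct_mulVec_comm (f t), two_mul]

theorem HasDerivAt.const_mul_sq {g : 𝕜 → 𝕜} {g' : 𝕜} (c : 𝕜) (hg : HasDerivAt g g' t) :
    HasDerivAt (fun s => c * g s ^ 2) (2 * (g t * (c * g'))) t :=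
  ((hg.fun_pow 2).const_mul c).congr_deriv (by push_cast; ring)

end

theorem lyapunov_derivative_general {n m r nθ : ℕ}
    (A : Fin r → Matrix (Fin n) (Fin n) ℝ)
    (Abar : Fin r → Fin nθ → Matrix (Fin n) (Fin n) ℝ)
    (L : Fin r → Matrix (Fin n) (Fin m) ℝ)
    (C : Matrix (Fin m) (Fin n) ℝ)
    (P : Matrix (Fin n) (Fin n) ℝ) (hP : P.IsSymm)
    (θ : Fin nθ → ℝ) (ρ : Fin nθ → ℝ) (hρ : ∀ j, 0 < ρ j)
    (μ : Fin r → ℝ → ℝ)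
    (φ : Fin r → Fin nθ → ℝ → Fin n → ℝ)
    (ex : ℝ → Fin n → ℝ) (eθ : Fin nθ → ℝ → ℝ) (t : ℝ)
    (hex : HasDerivAt ex
      (∑ i, μ i t • ((A i - L i * C + ∑ j, θ j • Abar i j).mulVec (ex t)
        + ∑ j, eθ j t • φ i j t)) t)
    (heθ : ∀ j, HasDerivAt (eθ j)
      (-(1 / ρ j) * ∑ i, μ i t * (φ i j t ⬝ᵥ P.mulVec (ex t))) t) :
    HasDerivAt (fun s => ex s ⬝ᵥ P.mulVec (ex s) + ∑ j, ρ j * (eθ j s) ^ 2)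
      (∑ i, μ i t * (ex t ⬝ᵥ
        ((P * (A i - L i * C + ∑ j, θ j • Abar i j)
          + (A i - L i * C + ∑ j, θ j • Abar i j)ᵀ * P).mulVec (ex t)))) t := by
  have hV := (hex.dotProduct_mulVec_self hP).add
    (HasDerivAt.fun_sum (u := Finset.univ) fun j _ => (heθ j).const_mul_sq (ρ j))
  refine hV.congr_deriv ?_
  have hcancel : ∀ j (c : ℝ), ρ j * (-(1 / ρ j) * c) = -c := fun j c => by
    field_simp [(hρ j).ne']
  simp only [sum_smul_add_sum_smul_dotProduct, hcancel, hP.dotProduct_mul_add_transpose_mul_mulVec]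
  simp only [mul_neg, Finset.sum_neg_distrib, mul_left_comm _ (2 : ℝ), ← Finset.mul_sum]
  ring

/-- **The parameter update law (14) annihilates the cross terms in `V̇`.**
With `φ_{ij}(t) := Ā_{ij} x̂(t) + B̄_{ij} u(t) + F̄_{ij}`, if at time `t` the state
error satisfies `ėₓ = Σᵢ μᵢ[(Aᵢ − LᵢC + Σⱼ θⱼ Ā_{ij}) eₓ + Σⱼ e_{θⱼ} φ_{ij}]` and
each parameter error satisfies `ė_{θⱼ} = −(1/ρⱼ) Σᵢ μᵢ φ_{ij}ᵀ P eₓ`, then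
`V(s) := eₓ(s)ᵀ P eₓ(s) + Σⱼ ρⱼ e_{θⱼ}(s)²` has derivative
`Σᵢ μᵢ eₓᵀ [P(Aᵢ − LᵢC + Σⱼ θⱼ Ā_{ij}) + (Aᵢ − LᵢC + Σⱼ θⱼ Ā_{ij})ᵀ P] eₓ` at `t`. -/
theorem lyapunov_derivative {n nu m r nθ : ℕ}
    (A : Fin r → Matrix (Fin n) (Fin n) ℝ)
    (Abar : Fin r → Fin nθ → Matrix (Fin n) (Fin n) ℝ)
    (Bbar : Fin r → Fin nθ → Matrix (Fin n) (Fin nu) ℝ)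
    (Fbar : Fin r → Fin nθ → Fin n → ℝ)
    (L : Fin r → Matrix (Fin n) (Fin m) ℝ)
    (C : Matrix (Fin m) (Fin n) ℝ)
    (P : Matrix (Fin n) (Fin n) ℝ) (hP : P.IsSymm)
    (θ : Fin nθ → ℝ) (ρ : Fin nθ → ℝ) (hρ : ∀ j, 0 < ρ j)
    (μ : Fin r → ℝ → ℝ) (xhat : ℝ → Fin n → ℝ) (u : ℝ → Fin nu → ℝ)
    (φ : Fin r → Fin nθ → ℝ → Fin n → ℝ)
    (hφ : ∀ i j t, φ i j t = (Abar i j).mulVec (xhat t)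
        + (Bbar i j).mulVec (u t) + Fbar i j)
    (ex : ℝ → Fin n → ℝ) (eθ : Fin nθ → ℝ → ℝ) (t : ℝ)
    (hex : HasDerivAt ex
      (∑ i, μ i t • ((A i - L i * C + ∑ j, θ j • Abar i j).mulVec (ex t)
        + ∑ j, eθ j t • φ i j t)) t)
    (heθ : ∀ j, HasDerivAt (eθ j)
      (-(1 / ρ j) * ∑ i, μ i t * (φ i j t ⬝ᵥ P.mulVec (ex t))) t) :
    HasDerivAt (fun s => ex s ⬝ᵥ P.mulVec (ex s) + ∑ j, ρ j * (eθ j s) ^ 2)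
      (∑ i, μ i t * (ex t ⬝ᵥ
        ((P * (A i - L i * C + ∑ j, θ j • Abar i j)
          + (A i - L i * C + ∑ j, θ j • Abar i j)ᵀ * P).mulVec (ex t)))) t :=
  lyapunov_derivative_general A Abar L C P hP θ ρ hρ μ φ ex eθ t hex heθ
end
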